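/- Let M be a finitely generated free abelian group and h an automorphism of M with h² = Id. Then (M, h) decomposes as a direct sum of copies of three basic pairs: (ℤ, Id), (ℤ, -Id), and (ℤ², s) where s swaps the two standard basis vectors. That is, there exist nonnegative integers n₁, n₂, n₃ and an isomorphism M ≅ ℤ^{n₁} ⊕ ℤ^{n₂} ⊕ (ℤ²)^{n₃} under which h acts as the identity on the first factor, as negation on the second factor, and as the coordinate swap on each ℤ² summand. -/

import Mathlib

set_option maxHeartbeats 1000000


theorem mz {M : Type} [AddCommGroup M] [Module ℤ M] (d : ℤ) (x : M) :
    @HSMul.hSMul ℤ M M (@instHSMul ℤ M (@SemigroupAction.toSMul ℤ M _ (@MulAction.toSemigroupAction ℤ M _ (@DistribMulAction.toMulAction ℤ M _ _ (@Module.toDistribMulAction ℤ M _ _ ‹Module ℤ M›))))) d x = d • x := by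
  have e := Int.cast_smul_eq_zsmul ℤ d x
  rwa [Int.cast_id] at e

theorem prim {M : Type} [AddCommGroup M] [Module ℤ M] [Module.Free ℤ M]
    [Module.Finite ℤ M] (y : M) (hy : y ≠ 0) :
    ∃ (d : ℤ) (z : M) (f : M →ₗ[ℤ] ℤ), d ≠ 0 ∧ d • z = y ∧ f z = 1 := by
  classical
  let b := Module.Free.chooseBasis ℤ M
  set ι := Module.Free.ChooseBasisIndex ℤ M
  let I : Ideal ℤ := Ideal.span (Set.range fun i => b.repr y i)
  have hIp : Submodule.IsPrincipal I := inferInstance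
  set d := hIp.generator with hdgen
  have hspan : Ideal.span {d} = I := hIp.span_singleton_generator
  have hdvd : ∀ i, d ∣ b.repr y i := by
    intro i
    have : b.repr y i ∈ I := Ideal.subset_span ⟨i, rfl⟩
    rwa [← hspan, Ideal.mem_span_singleton] at this
  have hdne : d ≠ 0 := by
    intro h0
    apply hy
    have h1 : ∀ i, b.repr y i = 0 := by
      intro i; have := hdvd i; rw [h0] at this; exact zero_dvd_iff.mp this
    have h2 : b.repr y = 0 := Finsupp.ext h1
    have := congrArg b.repr.symm h2
    simpa using this
  have hdI : d ∈ I := hIp.generator_mem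
  obtain ⟨c, hc⟩ := (Submodule.mem_span_range_iff_exists_fun ℤ).mp hdI
  refine ⟨d, ∑ i, (b.repr y i / d) • b i, ∑ i, c i • b.coord i, hdne, ?_, ?_⟩
  · -- d • z = y
    simp only [← mz]
    calc _ = ∑ i : ι, (b.repr y) i • b i := by
          rw [Finset.smul_sum]
          exact Finset.sum_congr rfl
            (fun i _ => by simp only [mz]; rw [← mul_zsmul, Int.mul_ediv_cancel' (hdvd i)])
      _ = y := by simpa only [mz] using b.sum_repr y
  · -- f z = 1
    set z := ∑ i, (b.repr y i / d) • b i with hzdef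
    set f : M →ₗ[ℤ] ℤ := ∑ i, c i • b.coord i with hfdef
    have hdz : d • z = y := by
      simp only [← mz, hzdef]
      calc _ = ∑ i : ι, (b.repr y) i • b i := by
            rw [Finset.smul_sum]
            exact Finset.sum_congr rfl
              (fun i _ => by simp only [mz]; rw [← mul_zsmul, Int.mul_ediv_cancel' (hdvd i)])
        _ = y := by simpa only [mz] using b.sum_repr y
    have hfy : f y = d := by
      rw [← hc]
      simp [hfdef, LinearMap.sum_apply, Module.Basis.coord_apply, smul_eq_mul]
    have h2 : f y = d * f z := by
      rw [← hdz, map_zsmul, smul_eq_mul]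
    exact (mul_left_cancel₀ hdne (by rw [mul_one, ← h2, hfy] : d * 1 = d * f z)).symm

theorem exists_swap_vector {M : Type} [AddCommGroup M] [Module.Free ℤ M]
    [Module.Finite ℤ M] (h : M ≃+ M) (hh : ∀ x, h (h x) = x)
    (f₀ : M →ₗ[ℤ] ℤ) (w : M) (hodd : ¬ (2 : ℤ) ∣ (f₀ w - f₀ (h w))) :
    ∃ (u : M) (f' : M →ₗ[ℤ] ℤ), f' u = 1 ∧ f' (h u) = 0 := by
  classical
  set hL : M →ₗ[ℤ] M := h.toIntLinearEquiv.toLinearMap with hhL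
  have hLapp : ∀ x, hL x = h x := fun x => rfl
  set N : Submodule ℤ M := LinearMap.ker (hL + LinearMap.id) with hN
  have hmemN : ∀ x : M, x ∈ N ↔ h x + x = 0 := by
    intro x
    simp [hN, LinearMap.mem_ker, LinearMap.add_apply, hLapp]
  have hNneg : ∀ x : M, x ∈ N → h x = -x := by
    intro x hx
    rw [hmemN] at hx
    exact eq_neg_of_add_eq_zero_left hx
  set g : M →ₗ[ℤ] ℤ := f₀ - f₀.comp hL with hg
  have hgapp : ∀ x, g x = f₀ x - f₀ (h x) := fun x => rfl
  have hgw : ¬ (2:ℤ) ∣ g w := hodd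
  have hgN : ∀ x : M, x ∈ N → g x = 2 * f₀ x := by
    intro x hx
    rw [hgapp, hNneg x hx, map_neg]
    ring
  -- the quotient P is free
  set π : M →ₗ[ℤ] (M ⧸ N) := N.mkQ with hπ
  haveI hnzsd : NoZeroSMulDivisors ℤ (M ⧸ N) := by
    refine ⟨fun {cc x} hcx => ?_⟩
    obtain ⟨m, rfl⟩ := Submodule.Quotient.mk_surjective N x
    rw [← Submodule.Quotient.mk_smul, Submodule.Quotient.mk_eq_zero, hmemN,
      map_zsmul, ← smul_add] at hcx
    rcases smul_eq_zero.mp hcx with h1 | h2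
    · exact Or.inl h1
    · exact Or.inr (by rw [Submodule.Quotient.mk_eq_zero, hmemN]; exact h2)
  haveI : Module.Free ℤ (M ⧸ N) := Module.free_of_finite_type_torsion_free'
  -- a splitting s of π
  obtain ⟨nP, bP⟩ := Module.basisOfFiniteTypeTorsionFree' (R := ℤ) (M := M ⧸ N)
  set s : (M ⧸ N) →ₗ[ℤ] M :=
    bP.constr ℤ (fun i => (Submodule.Quotient.mk_surjective N (bP i)).choose) with hs
  have hπs : ∀ p, π (s p) = p := by
    have : π.comp s = LinearMap.id := by
      apply bP.ext
      intro i
      simp only [LinearMap.comp_apply, hs, Module.Basis.constr_basis, LinearMap.id_apply]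
      exact (Submodule.Quotient.mk_surjective N (bP i)).choose_spec
    intro p
    exact DFunLike.congr_fun this p
  -- w has nonzero image in P
  have hπw : π w ≠ 0 := by
    intro h0
    apply hgw
    rw [hπ, Submodule.mkQ_apply, Submodule.Quotient.mk_eq_zero] at h0
    rw [hgN w h0]
    exact ⟨f₀ w, rfl⟩
  obtain ⟨d, q, α, hdne, hdq, hαq⟩ := prim (π w) hπw
  set w' : M := s q with hw'
  have hπw' : π w' = q := hπs q
  -- g w' is odd
  have hδ : w - d • w' ∈ N := by
    have : π (w - d • w') = 0 := by
      rw [map_sub, map_zsmul, hπw', hdq, sub_self]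
    rwa [hπ, Submodule.mkQ_apply, Submodule.Quotient.mk_eq_zero] at this
  have hgw' : ¬ (2:ℤ) ∣ g w' := by
    intro ⟨t, ht⟩
    apply hgw
    have : g w = d * g w' + g (w - d • w') := by
      rw [map_sub, map_zsmul, smul_eq_mul]; ring
    rw [this, ht, hgN _ hδ]
    exact ⟨d * t + f₀ (w - d • w'), by ring⟩
  -- m₀
  set m₀ : M := w' - h w' with hm₀
  have hm₀N : m₀ ∈ N := by
    rw [hmemN, hm₀, map_sub, hh]
    abel
  have hf₀m₀ : f₀ m₀ = g w' := by rw [hm₀, map_sub, hgapp]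
  set m₀' : N := ⟨m₀, hm₀N⟩ with hm₀'
  -- basis of N
  set c := Module.Free.chooseBasis ℤ N with hc
  set κ : Module.Free.ChooseBasisIndex ℤ N → ℤ := fun i => c.equivFun m₀' i with hκ
  have hm₀sum : (m₀' : N) = ∑ i, κ i • c i := (c.sum_equivFun m₀').symm
  -- some coordinate is odd
  have hoddco : ∃ i₀, ¬ (2:ℤ) ∣ κ i₀ := by
    by_contra hall
    push_neg at hall
    apply hgw'
    rw [← hf₀m₀]
    have : f₀ m₀ = ∑ i, κ i * f₀ (c i : M) := by
      have h1 : (m₀ : M) = ∑ i, κ i • (c i : M) := by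
        have := congrArg (N.subtype) hm₀sum
        simpa [map_sum] using this
      rw [h1, map_sum]
      exact Finset.sum_congr rfl (fun i _ => by rw [map_zsmul, smul_eq_mul])
    rw [this]
    apply Finset.dvd_sum
    intro i _
    exact Dvd.dvd.mul_right (hall i) _
  obtain ⟨i₀, hi₀⟩ := hoddco
  -- ζ' and ν'
  set ν' : N := c.equivFun.symm (fun i => κ i / 2) with hν'
  set ζ' : N := m₀' - (2:ℤ) • ν' with hζ'
  have hν'co : c.equivFun ν' = fun i => κ i / 2 := by
    rw [hν']; exact c.equivFun.apply_symm_apply _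
  have hζco : ∀ i, c.equivFun ζ' i = κ i - 2 * (κ i / 2) := by
    intro i
    rw [hζ', map_sub, map_zsmul]
    rw [Pi.sub_apply, Pi.smul_apply, hν'co]
    simp [smul_eq_mul, hκ]
  have hζi₀ : c.equivFun ζ' i₀ = 1 := by
    rw [hζco, ← Int.emod_def]
    rwa [Int.two_dvd_ne_zero] at hi₀
  -- u
  set u : M := w' - (ν' : M) with hu
  have hνN : (ν' : M) ∈ N := ν'.2
  have huhu : u - h u = (ζ' : M) := by
    rw [hu, map_sub, hNneg _ hνN]
    rw [hζ', hm₀']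
    push_cast
    rw [hm₀]
    abel
  -- functionals
  set A : M →ₗ[ℤ] ℤ := α.comp π with hA
  have hAu : A u = 1 := by
    rw [hA, LinearMap.comp_apply, hu, map_sub, hπw']
    have : π (ν' : M) = 0 := by
      rw [hπ, Submodule.mkQ_apply, Submodule.Quotient.mk_eq_zero]
      exact hνN
    rw [this, sub_zero, hαq]
  have hAζ : A (ζ' : M) = 0 := by
    rw [hA, LinearMap.comp_apply]
    have : π (ζ' : M) = 0 := by
      rw [hπ, Submodule.mkQ_apply, Submodule.Quotient.mk_eq_zero]
      exact ζ'.2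
    rw [this, map_zero]
  set pr : M →ₗ[ℤ] N := (LinearMap.id - s.comp π).codRestrict N (by
    intro x
    rw [hmemN]
    have h1 : π (x - s (π x)) = 0 := by rw [map_sub, hπs, sub_self]
    rw [hπ, Submodule.mkQ_apply, Submodule.Quotient.mk_eq_zero] at h1
    rw [hmemN] at h1
    simpa [hπ] using h1) with hpr
  have hprN : ∀ n : N, pr (n : M) = n := by
    intro n
    have hπn : π (n : M) = 0 := by
      rw [hπ, Submodule.mkQ_apply, Submodule.Quotient.mk_eq_zero]
      exact n.2
    apply Subtype.ext
    simp [hpr, LinearMap.codRestrict, hπn]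
  set μ : M →ₗ[ℤ] ℤ := (c.coord i₀).comp pr with hμ
  have hμζ : μ (ζ' : M) = 1 := by
    rw [hμ, LinearMap.comp_apply, hprN, Module.Basis.coord_apply]
    have h2 : (c.repr ζ') i₀ = c.equivFun ζ' i₀ := by rw [Module.Basis.equivFun_apply]
    rw [h2, hζi₀]
  set eE : ℤ := μ u with heE
  refine ⟨u, (1 - eE) • A + μ, ?_, ?_⟩
  · simp only [LinearMap.add_apply, LinearMap.smul_apply, smul_eq_mul, hAu, ← heE]
    ring
  · have hhu : h u = u - (ζ' : M) := by rw [← huhu]; abel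
    rw [hhu]
    simp only [map_sub, LinearMap.add_apply, LinearMap.smul_apply, smul_eq_mul,
      hAu, hAζ, hμζ, ← heE]
    ring

theorem splitA {M : Type} [AddCommGroup M]
    (h : M ≃+ M) (hh : ∀ x, h (h x) = x) (z : M) (hz : h z = -z)
    (f : M →ₗ[ℤ] ℤ) (hfh : ∀ x, f (h x) = -f x) (hfz : f z = 1) :
    ∃ (e : M ≃ₗ[ℤ] ℤ × LinearMap.ker f) (h' : LinearMap.ker f ≃+ LinearMap.ker f),
      (∀ y, h' (h' y) = y) ∧ (∀ x, e (h x) = (-(e x).1, h' (e x).2)) := by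
  have hmem : ∀ x : M, x - f x • z ∈ LinearMap.ker f := by
    intro x
    simp [LinearMap.mem_ker, map_sub, f.map_smul, hfz, smul_eq_mul]
  have hinv : ∀ x : M, x ∈ LinearMap.ker f → h x ∈ LinearMap.ker f := by
    intro x hx
    simp only [LinearMap.mem_ker] at hx ⊢
    rw [hfh, hx, neg_zero]
  refine ⟨?_, ?_, ?_, ?_⟩
  · exact
    { toFun := fun x => (f x, ⟨x - f x • z, hmem x⟩)
      invFun := fun p => p.1 • z + (p.2 : M)
      left_inv := by
        intro x
        simp
      right_inv := by
        rintro ⟨c, ⟨y, hy⟩⟩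
        simp only [LinearMap.mem_ker] at hy
        simp [f.map_smul, hfz, smul_eq_mul, hy]
      map_add' := by
        intro x y
        ext <;> simp [add_smul] <;> abel
      map_smul' := by
        intro c x
        ext <;> simp [f.map_smul, smul_sub, smul_smul, smul_eq_mul] }
  · exact
    { toFun := fun y => ⟨h y, hinv y y.2⟩
      invFun := fun y => ⟨h y, hinv y y.2⟩
      left_inv := by intro y; ext; simp [hh]
      right_inv := by intro y; ext; simp [hh]
      map_add' := by intro x y; ext; simp }
  · intro y; ext; simp [hh]
  · intro x
    refine Prod.ext ?_ ?_
    · simpa using hfh x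
    · ext
      simp only []
      show h x - f (h x) • z = h (x - f x • z)
      rw [hfh, map_sub, map_zsmul, hz]
      simp [smul_neg]

theorem splitB {M : Type} [AddCommGroup M]
    (h : M ≃+ M) (hh : ∀ x, h (h x) = x) (u : M)
    (f : M →ₗ[ℤ] ℤ) (hfu : f u = 1) (hfhu : f (h u) = 0) :
    ∃ (K : Submodule ℤ M) (e : M ≃ₗ[ℤ] (ℤ × ℤ) × K) (h' : K ≃+ K),
      (∀ y, h' (h' y) = y) ∧
      (∀ x, e (h x) = (Prod.swap (e x).1, h' (e x).2)) := by
  classical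
  set v := h u with hv
  -- second functional
  set f₂ : M →ₗ[ℤ] ℤ := f.comp (h.toIntLinearEquiv.toLinearMap) with hf₂
  have hf₂app : ∀ x, f₂ x = f (h x) := fun x => rfl
  have hfv : f v = 0 := hfhu
  have hf₂u : f₂ u = 0 := by rw [hf₂app]; exact hfhu
  have hf₂v : f₂ v = 1 := by rw [hf₂app, hv, hh]; exact hfu
  set K : Submodule ℤ M := LinearMap.ker f ⊓ LinearMap.ker f₂ with hK
  have hmemK : ∀ x : M, x ∈ K ↔ f x = 0 ∧ f (h x) = 0 := by
    intro x
    simp [hK, Submodule.mem_inf, LinearMap.mem_ker, hf₂app]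
  have hinv : ∀ x, x ∈ K → h x ∈ K := by
    intro x hx
    rw [hmemK] at hx ⊢
    rw [hh]
    exact ⟨hx.2, hx.1⟩
  have hmem : ∀ x : M, x - f x • u - f₂ x • v ∈ K := by
    intro x
    rw [hmemK]
    constructor
    · simp [map_sub, f.map_smul, smul_eq_mul, hfu, hfv]
    · have : h (x - f x • u - f₂ x • v) = h x - f x • v - f₂ x • u := by
        rw [map_sub, map_sub, map_zsmul, map_zsmul, ← hv, hv, hh]
      rw [this]
      simp [map_sub, f.map_smul, smul_eq_mul, hfu, hfv, hf₂app x]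
  have hA : f (h u) = 0 := hfhu
  have hB : f (h v) = 1 := by rw [hv, hh]; exact hfu
  refine ⟨K, ?_, ?_, ?_, ?_⟩
  · exact
    { toFun := fun x => ((f x, f₂ x), ⟨x - f x • u - f₂ x • v, hmem x⟩)
      invFun := fun p => p.1.1 • u + p.1.2 • v + (p.2 : M)
      left_inv := by
        intro x
        simp only []
        abel
      right_inv := by
        rintro ⟨⟨a, c⟩, ⟨y, hy⟩⟩
        rw [hmemK] at hy
        have e1 : f (a • u + c • v + y) = a := by
          simp [map_add, f.map_smul, smul_eq_mul, hfu, hfv, hy.1]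
        have e2 : f₂ (a • u + c • v + y) = c := by
          simp [map_add, f₂.map_smul, smul_eq_mul, hf₂app, hy.2, hA, hB]
        refine Prod.ext (Prod.ext ?_ ?_) ?_
        · exact e1
        · exact e2
        · ext
          simp only [e1, e2]
          abel
      map_add' := by
        intro x y
        refine Prod.ext (Prod.ext (by simp) (by simp)) ?_
        ext
        simp [add_smul]
        abel
      map_smul' := by
        intro c x
        refine Prod.ext (Prod.ext (by simp) (by simp)) ?_
        ext
        simp [f.map_smul, f₂.map_smul, smul_sub, smul_smul, smul_eq_mul] }
  · exact
    { toFun := fun y => ⟨h y, hinv y y.2⟩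
      invFun := fun y => ⟨h y, hinv y y.2⟩
      left_inv := by intro y; ext; simp [hh]
      right_inv := by intro y; ext; simp [hh]
      map_add' := by intro x y; ext; simp }
  · intro y; ext; simp [hh]
  · intro x
    refine Prod.ext (Prod.ext ?_ ?_) ?_
    · show f (h x) = f₂ x
      rw [hf₂app]
    · show f₂ (h x) = f x
      rw [hf₂app, hh]
    · ext
      show h x - f (h x) • u - f₂ (h x) • v = h (x - f x • u - f₂ x • v)
      rw [map_sub, map_sub, map_zsmul, map_zsmul, ← hv, hv, hh, hf₂app, hf₂app, hh]
      abel

noncomputable section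

def finConsAddEquiv {α : Type} [AddCommMonoid α] (n : ℕ) :
    (α × (Fin n → α)) ≃+ (Fin (n + 1) → α) where
  toFun p := Fin.cons p.1 p.2
  invFun f := (f 0, Fin.tail f)
  left_inv p := by simp
  right_inv f := by simp [Fin.cons_self_tail]
  map_add' p q := by
    funext i
    induction i using Fin.cases <;> simp

def shuffleA (n₁ n₂ n₃ : ℕ) :
    (ℤ × ((Fin n₁ → ℤ) × (Fin n₂ → ℤ) × (Fin n₃ → ℤ × ℤ))) ≃+
      ((Fin n₁ → ℤ) × (Fin (n₂ + 1) → ℤ) × (Fin n₃ → ℤ × ℤ)) where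
  toFun p := (p.2.1, Fin.cons p.1 p.2.2.1, p.2.2.2)
  invFun q := (q.2.1 0, q.1, Fin.tail q.2.1, q.2.2)
  left_inv p := by simp
  right_inv q := by simp [Fin.cons_self_tail]
  map_add' p q := by
    refine Prod.ext rfl (Prod.ext ?_ rfl)
    funext i
    induction i using Fin.cases <;> simp

def shuffleB (n₁ n₂ n₃ : ℕ) :
    ((ℤ × ℤ) × ((Fin n₁ → ℤ) × (Fin n₂ → ℤ) × (Fin n₃ → ℤ × ℤ))) ≃+
      ((Fin n₁ → ℤ) × (Fin n₂ → ℤ) × (Fin (n₃ + 1) → ℤ × ℤ)) where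
  toFun p := (p.2.1, p.2.2.1, Fin.cons p.1 p.2.2.2)
  invFun q := (q.2.2 0, q.1, q.2.1, Fin.tail q.2.2)
  left_inv p := by simp
  right_inv q := by simp [Fin.cons_self_tail]
  map_add' p q := by
    refine Prod.ext rfl (Prod.ext rfl ?_)
    funext i
    induction i using Fin.cases <;> simp

theorem negCons {n : ℕ} (c : ℤ) (v : Fin n → ℤ) :
    (Fin.cons (-c) (fun i => -(v i)) : Fin (n+1) → ℤ) =
      fun i => -((Fin.cons c v : Fin (n+1) → ℤ) i) := by
  funext i
  induction i using Fin.cases <;> simp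

theorem swapCons {n : ℕ} (c : ℤ × ℤ) (v : Fin n → ℤ × ℤ) :
    (Fin.cons (Prod.swap c) (fun i => Prod.swap (v i)) : Fin (n+1) → ℤ × ℤ) =
      fun i => Prod.swap ((Fin.cons c v : Fin (n+1) → ℤ × ℤ) i) := by
  funext i
  induction i using Fin.cases <;> simp

noncomputable def combA {K : Type} [AddCommGroup K] {n₁ n₂ n₃ : ℕ}
    (e' : K ≃+ (Fin n₁ → ℤ) × (Fin n₂ → ℤ) × (Fin n₃ → ℤ × ℤ)) :
    (ℤ × K) ≃+ ((Fin n₁ → ℤ) × (Fin (n₂ + 1) → ℤ) × (Fin n₃ → ℤ × ℤ)) :=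
  ((AddEquiv.refl ℤ).prodCongr e').trans (shuffleA n₁ n₂ n₃)

theorem combA_apply {K : Type} [AddCommGroup K] {n₁ n₂ n₃ : ℕ}
    (e' : K ≃+ (Fin n₁ → ℤ) × (Fin n₂ → ℤ) × (Fin n₃ → ℤ × ℤ)) (p : ℤ × K) :
    combA e' p = ((e' p.2).1, Fin.cons p.1 (e' p.2).2.1, (e' p.2).2.2) := rfl

noncomputable def combB {K : Type} [AddCommGroup K] {n₁ n₂ n₃ : ℕ}
    (e' : K ≃+ (Fin n₁ → ℤ) × (Fin n₂ → ℤ) × (Fin n₃ → ℤ × ℤ)) :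
    ((ℤ × ℤ) × K) ≃+ ((Fin n₁ → ℤ) × (Fin n₂ → ℤ) × (Fin (n₃ + 1) → ℤ × ℤ)) :=
  ((AddEquiv.refl (ℤ × ℤ)).prodCongr e').trans (shuffleB n₁ n₂ n₃)

theorem combB_apply {K : Type} [AddCommGroup K] {n₁ n₂ n₃ : ℕ}
    (e' : K ≃+ (Fin n₁ → ℤ) × (Fin n₂ → ℤ) × (Fin n₃ → ℤ × ℤ)) (p : (ℤ × ℤ) × K) :
    combB e' p = ((e' p.2).1, (e' p.2).2.1, Fin.cons p.1 (e' p.2).2.2) := rfl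

theorem main : ∀ (k : ℕ) (M : Type) [AddCommGroup M] [Module.Free ℤ M] [Module.Finite ℤ M]
    (h : M ≃+ M), (∀ x, h (h x) = x) → Module.finrank ℤ M ≤ k →
    ∃ (n₁ n₂ n₃ : ℕ) (e : M ≃+ (Fin n₁ → ℤ) × (Fin n₂ → ℤ) × (Fin n₃ → ℤ × ℤ)),
      ∀ x, e (h x) = ((e x).1, fun i => -((e x).2.1 i), fun i => Prod.swap ((e x).2.2 i)) := by
  intro k
  induction k with
  | zero =>
    intro M _ _ _ h hh hr
    haveI hsM : Subsingleton M := Module.finrank_zero_iff.mp (Nat.le_zero.mp hr)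
    haveI h0 : Subsingleton (Fin 0 → ℤ) := ⟨fun a b => funext fun i => i.elim0⟩
    haveI h0' : Subsingleton (Fin 0 → ℤ × ℤ) := ⟨fun a b => funext fun i => i.elim0⟩
    refine ⟨0, 0, 0,
      ⟨⟨fun _ => 0, fun _ => 0, fun x => Subsingleton.elim _ _,
        fun x => Subsingleton.elim _ _⟩, fun a b => Subsingleton.elim _ _⟩,
      fun x => Subsingleton.elim _ _⟩
  | succ k IH =>
    intro M _ _ _ h hh hr
    by_cases hk : Module.finrank ℤ M ≤ k
    · exact IH M h hh hk
    have hr' : Module.finrank ℤ M = k + 1 := by omega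
    by_cases hid : ∀ x, h x = x
    · -- identity case
      set b := Module.finBasis ℤ M with hb
      set ef := b.equivFun with hef
      refine ⟨Module.finrank ℤ M, 0, 0,
        { toFun := fun x => (ef x, fun i => i.elim0, fun i => i.elim0)
          invFun := fun p => ef.symm p.1
          left_inv := by intro x; simp
          right_inv := by
            intro p
            refine Prod.ext (by simp) (Prod.ext ?_ ?_)
            · funext i; exact i.elim0
            · funext i; exact i.elim0
          map_add' := by
            intro x y
            refine Prod.ext (by simp) (Prod.ext ?_ ?_)
            · funext i; exact i.elim0
            · funext i; exact i.elim0 }, ?_⟩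
      intro x
      rw [hid x]
      refine Prod.ext rfl (Prod.ext ?_ ?_)
      · funext i; exact i.elim0
      · funext i; exact i.elim0
    · push_neg at hid
      obtain ⟨x₀, hx₀⟩ := hid
      have hyne : x₀ - h x₀ ≠ 0 := sub_ne_zero.mpr (Ne.symm hx₀)
      obtain ⟨d, z, f₁, hdne, hdz, hf₁z⟩ := prim (x₀ - h x₀) hyne
      have hy : h (x₀ - h x₀) = -(x₀ - h x₀) := by
        rw [map_sub, hh]
        abel
      have hz : h z = -z := by
        have h1 : d • (h z + z) = 0 := by
          rw [smul_add, ← map_zsmul h d z, hdz, hy]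
          abel
        rcases smul_eq_zero.mp h1 with h2 | h2
        · exact absurd h2 hdne
        · exact eq_neg_of_add_eq_zero_left h2
      by_cases hA : ∃ f : M →ₗ[ℤ] ℤ, (∀ t, f (h t) = -f t) ∧ f z = 1
      · -- split off (ℤ, -1)
        obtain ⟨f, hfh, hfz⟩ := hA
        obtain ⟨e₁, h', hinv', hcomm⟩ := splitA h hh z hz f hfh hfz
        have hrk : Module.finrank ℤ M = 1 + Module.finrank ℤ (LinearMap.ker f) := by
          rw [e₁.finrank_eq, Module.finrank_prod, Module.finrank_self]
        have hKk : Module.finrank ℤ (LinearMap.ker f) ≤ k := by omega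
        obtain ⟨n₁, n₂, n₃, e', hprop⟩ := IH (LinearMap.ker f) h' hinv' hKk
        set E := e₁.toAddEquiv with hE
        have hcommA : ∀ t, E (h t) = (-(E t).1, h' (E t).2) := fun t => hcomm t
        refine ⟨n₁, n₂ + 1, n₃, E.trans (combA e'), ?_⟩
        intro x
        rw [AddEquiv.trans_apply, AddEquiv.trans_apply, hcommA x,
          combA_apply, combA_apply]
        have hp := hprop (E x).2
        refine Prod.ext ?_ (Prod.ext ?_ ?_)
        · show (e' (h' (E x).2)).1 = _
          rw [hp]
        · show (Fin.cons (-(E x).1) (e' (h' (E x).2)).2.1 : Fin (n₂+1) → ℤ) = _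
          rw [hp]
          exact negCons _ _
        · show (e' (h' (E x).2)).2.2 = _
          rw [hp]
      · -- split off swap
        have hw : ∃ w, ¬ (2:ℤ) ∣ (f₁ w - f₁ (h w)) := by
          by_contra hall
          push_neg at hall
          apply hA
          have hF : ∀ t, 2 * ((f₁ t - f₁ (h t)) / 2) = f₁ t - f₁ (h t) := fun t =>
            Int.mul_ediv_cancel' (hall t)
          refine ⟨{ toFun := fun t => (f₁ t - f₁ (h t)) / 2
                    map_add' := ?_
                    map_smul' := ?_ }, ?_, ?_⟩
          · intro a b
            apply mul_left_cancel₀ (two_ne_zero (α := ℤ))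
            rw [mul_add, hF, hF, hF, map_add, map_add, map_add]
            ring
          · intro c a
            apply mul_left_cancel₀ (two_ne_zero (α := ℤ))
            rw [hF]
            simp only [RingHom.id_apply, smul_eq_mul]
            rw [map_zsmul, map_zsmul, map_zsmul, smul_eq_mul, smul_eq_mul]
            rw [show (2:ℤ) * (c * ((f₁ a - f₁ (h a))/2)) = c * (2 * ((f₁ a - f₁ (h a))/2)) by ring, hF]
            ring
          · intro t
            show (f₁ (h t) - f₁ (h (h t))) / 2 = -((f₁ t - f₁ (h t)) / 2)
            apply mul_left_cancel₀ (two_ne_zero (α := ℤ))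
            rw [hF, hh, mul_neg, hF]
            ring
          · show (f₁ z - f₁ (h z)) / 2 = 1
            apply mul_left_cancel₀ (two_ne_zero (α := ℤ))
            rw [hF, hz, map_neg, hf₁z]
            ring
        obtain ⟨w, hwodd⟩ := hw
        obtain ⟨u, f', hf'u, hf'hu⟩ := exists_swap_vector h hh f₁ w hwodd
        obtain ⟨K, e₁, h', hinv', hcomm⟩ := splitB h hh u f' hf'u hf'hu
        have hrk : Module.finrank ℤ M = 2 + Module.finrank ℤ K := by
          rw [e₁.finrank_eq, Module.finrank_prod, Module.finrank_prod, Module.finrank_self]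
        have hKk : Module.finrank ℤ K ≤ k := by omega
        obtain ⟨n₁, n₂, n₃, e', hprop⟩ := IH K h' hinv' hKk
        set E := e₁.toAddEquiv with hE
        have hcommA : ∀ t, E (h t) = (Prod.swap (E t).1, h' (E t).2) := fun t => hcomm t
        refine ⟨n₁, n₂, n₃ + 1, E.trans (combB e'), ?_⟩
        intro x
        rw [AddEquiv.trans_apply, AddEquiv.trans_apply, hcommA x,
          combB_apply, combB_apply]
        have hp := hprop (E x).2
        refine Prod.ext ?_ (Prod.ext ?_ ?_)
        · show (e' (h' (E x).2)).1 = _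
          rw [hp]
        · show (e' (h' (E x).2)).2.1 = _
          rw [hp]
        · show (Fin.cons (Prod.swap (E x).1) (e' (h' (E x).2)).2.2 : Fin (n₃+1) → ℤ × ℤ) = _
          rw [hp]
          exact swapCons _ _

/-- Decomposition of a pair (M, h), M a finitely generated free abelian group and
h an automorphism with h² = Id, into copies of (ℤ, Id), (ℤ, -Id) and (ℤ², swap). -/
theorem stmt_0 (M : Type) [AddCommGroup M] [Module ℤ M]
    [Module.Free ℤ M] [Module.Finite ℤ M]
    (h : M ≃+ M) (hh : ∀ x, h (h x) = x) :
    ∃ (n₁ n₂ n₃ : ℕ)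
      (e : M ≃+ (Fin n₁ → ℤ) × (Fin n₂ → ℤ) × (Fin n₃ → ℤ × ℤ)),
      ∀ x : M, e (h x) =
        ((e x).1, fun i => -((e x).2.1 i), fun i => Prod.swap ((e x).2.2 i)) := by
  rename_i iAG iM iFr iFi
  have hq : iM = AddCommGroup.toIntModule M :=
    ((AddCommGroup.uniqueIntModule).uniq iM).trans
      ((AddCommGroup.uniqueIntModule).uniq _).symm
  subst hq
  exact main (Module.finrank ℤ M) M h hh le_rfl

end
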